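/- If r* ∈ ℝ^N_{>0} is a generalized metric with constant extended α-curvature (K̃_i(r*) = s_α(r*)·(r*_i)^α for all i), then for every nonempty proper subset A ⊂ V one has 2πχ(M)·(Σ_{i∈A}(r*_i)^α)/(Σ_{j=1}^N (r*_j)^α) ≥ −Σ_{(e,v)∈Lk(A)} (π − Λ(I_e)) + 2πχ(F_A). -/
import Mathlib

set_option maxHeartbeats 1000000


open Real Filter Topology

namespace IDCP

variable {N : ℕ}

/-- The set of edges: 2-element subsets of vertices contained in some face. -/
def edges (Fc : Finset (Finset (Fin N))) : Finset (Finset (Fin N)) :=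
  Fc.biUnion fun f => f.powersetCard 2

/-- `Fc` is the face set of a triangulation of a closed connected surface:
every face has 3 vertices, every edge lies in exactly two faces, and the
1-skeleton is connected. -/
structure IsTriangulation (Fc : Finset (Finset (Fin N))) : Prop where
  card3 : ∀ f ∈ Fc, f.card = 3
  edge2 : ∀ e ∈ edges Fc, (Fc.filter fun f => e ⊆ f).card = 2
  conn : (SimpleGraph.fromRel fun i j => ({i, j} : Finset (Fin N)) ∈ edges Fc).Connected

/-- Euler characteristic χ(M) = N − |E| + |F|. -/
def chi (Fc : Finset (Finset (Fin N))) : ℤ :=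
  (N : ℤ) - ((edges Fc).card : ℤ) + (Fc.card : ℤ)

/-- Edge length l_ij = √(r_i² + r_j² + 2 r_i r_j I_{ij}). -/
noncomputable def len (I : Finset (Fin N) → ℝ) (r : Fin N → ℝ) (i j : Fin N) : ℝ :=
  Real.sqrt (r i ^ 2 + r j ^ 2 + 2 * r i * r j * I {i, j})

/-- The cosine of the inner angle at `i` in triangle `{i,j,k}`. -/
noncomputable def cosAng (I : Finset (Fin N) → ℝ) (r : Fin N → ℝ) (i j k : Fin N) : ℝ :=
  (len I r i j ^ 2 + len I r i k ^ 2 - len I r j k ^ 2) / (2 * len I r i j * len I r i k)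

/-- The auxiliary function Λ. -/
noncomputable def Lam (x : ℝ) : ℝ :=
  if x ≤ -1 then π else if x ≤ 1 then Real.arccos x else 0

/-- Discrete Gaussian curvature K_i = 2π − Σ_{{i,j,k}∈F} θ_i^{jk}.  Every face
containing `i` appears exactly twice (once for each ordering of `j,k`), whence
the factor 1/2. -/
noncomputable def K (Fc : Finset (Finset (Fin N))) (I : Finset (Fin N) → ℝ)
    (r : Fin N → ℝ) (i : Fin N) : ℝ :=
  2 * π - (1 / 2) * ∑ j, ∑ k,
    (if ({i, j, k} : Finset (Fin N)) ∈ Fc then Real.arccos (cosAng I r i j k) else 0)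

/-- Extended curvature K̃_i = 2π − Σ θ̃_i^{jk}, using the generalized angles Λ. -/
noncomputable def Kt (Fc : Finset (Finset (Fin N))) (I : Finset (Fin N) → ℝ)
    (r : Fin N → ℝ) (i : Fin N) : ℝ :=
  2 * π - (1 / 2) * ∑ j, ∑ k,
    (if ({i, j, k} : Finset (Fin N)) ∈ Fc then Lam (cosAng I r i j k) else 0)

/-- The set Ω of inversive distance circle packing metrics. -/
def Omega (Fc : Finset (Finset (Fin N))) (I : Finset (Fin N) → ℝ) : Set (Fin N → ℝ) :=
  {r | (∀ i, 0 < r i) ∧ ∀ i j k : Fin N, ({i, j, k} : Finset (Fin N)) ∈ Fc →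
    len I r j k < len I r i j + len I r i k}

/-- s_α = 2πχ(M)/‖r‖_α^α. -/
noncomputable def sA (Fc : Finset (Finset (Fin N))) (α : ℝ) (r : Fin N → ℝ) : ℝ :=
  2 * π * (chi Fc : ℝ) / ∑ j, r j ^ α

/-- Back from u-coordinates: r_i = e^{u_i}. -/
noncomputable def rOf (u : Fin N → ℝ) : Fin N → ℝ := fun i => Real.exp (u i)

/-- ln Ω, the image of Ω under the coordinate change r ↦ u, u_i = ln r_i. -/
def lnOmega (Fc : Finset (Finset (Fin N))) (I : Finset (Fin N) → ℝ) : Set (Fin N → ℝ) :=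
  {u | rOf u ∈ Omega Fc I}

/-- `u` solves the α-flow du_i/dt = s_α r_i^α − K_i on the time set `D`,
staying in ln Ω. -/
def IsFlowSol (Fc : Finset (Finset (Fin N))) (I : Finset (Fin N) → ℝ) (α : ℝ)
    (D : Set ℝ) (u : ℝ → Fin N → ℝ) : Prop :=
  ∀ t ∈ D, rOf (u t) ∈ Omega Fc I ∧
    ∀ i, HasDerivWithinAt (fun s => u s i)
      (sA Fc α (rOf (u t)) * rOf (u t) i ^ α - K Fc I (rOf (u t)) i) D t

/-- `u` solves the extended α-flow du_i/dt = s_α r_i^α − K̃_i on the time set `D`. -/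
def IsExtFlowSol (Fc : Finset (Finset (Fin N))) (I : Finset (Fin N) → ℝ) (α : ℝ)
    (D : Set ℝ) (u : ℝ → Fin N → ℝ) : Prop :=
  ∀ t ∈ D, ∀ i, HasDerivWithinAt (fun s => u s i)
      (sA Fc α (rOf (u t)) * rOf (u t) i ^ α - Kt Fc I (rOf (u t)) i) D t

/-- Lk(A): pairs (e,v) with both endpoints of e outside A, v ∈ A, and e,v spanning a face. -/
def Lk (Fc : Finset (Finset (Fin N))) (A : Finset (Fin N)) :
    Finset (Finset (Fin N) × Fin N) :=
  ((edges Fc) ×ˢ (Finset.univ : Finset (Fin N))).filter fun p =>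
    (∀ x ∈ p.1, x ∉ A) ∧ p.2 ∈ A ∧ insert p.2 p.1 ∈ Fc

/-- Euler characteristic χ(F_A) of the subcomplex spanned by A. -/
def chiSub (Fc : Finset (Finset (Fin N))) (A : Finset (Fin N)) : ℤ :=
  (A.card : ℤ) - (((edges Fc).filter (fun e => e ⊆ A)).card : ℤ)
    + ((Fc.filter (fun f => f ⊆ A)).card : ℤ)

/-- The lower bound −Σ_{(e,v)∈Lk(A)}(π − Λ(I_e)) + 2πχ(F_A) defining Y_A. -/
noncomputable def Ybound (Fc : Finset (Finset (Fin N))) (I : Finset (Fin N) → ℝ)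
    (A : Finset (Fin N)) : ℝ :=
  -(∑ p ∈ Lk Fc A, (π - Lam (I p.1))) + 2 * π * (chiSub Fc A : ℝ)

/-- x ∈ Y. -/
noncomputable def memY (Fc : Finset (Finset (Fin N))) (I : Finset (Fin N) → ℝ)
    (x : Fin N → ℝ) : Prop :=
  (∑ i, x i) = 2 * π * (chi Fc : ℝ) ∧
    ∀ A : Finset (Fin N), A.Nonempty → A ≠ Finset.univ → Ybound Fc I A < ∑ i ∈ A, x i

/-- x ∈ Ȳ. -/
noncomputable def memYbar (Fc : Finset (Finset (Fin N))) (I : Finset (Fin N) → ℝ)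
    (x : Fin N → ℝ) : Prop :=
  (∑ i, x i) = 2 * π * (chi Fc : ℝ) ∧
    ∀ A : Finset (Fin N), A.Nonempty → A ≠ Finset.univ → Ybound Fc I A ≤ ∑ i ∈ A, x i

lemma Lam_eq (x : ℝ) : Lam x = Real.arccos x := by
  unfold Lam
  split_ifs with h1 h2
  · rw [Real.arccos_of_le_neg_one h1]
  · rfl
  · rw [Real.arccos_of_one_le (le_of_not_ge h2)]

lemma Lam_nonneg (x : ℝ) : 0 ≤ Lam x := by rw [Lam_eq]; exact Real.arccos_nonneg x

lemma Lam_le_pi (x : ℝ) : Lam x ≤ π := by rw [Lam_eq]; exact Real.arccos_le_pi x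

lemma arccos_antitone : Antitone Real.arccos := by
  intro x y h
  unfold Real.arccos
  exact sub_le_sub_left (Real.monotone_arcsin h) _

lemma Lam_antitone : Antitone Lam := by
  intro x y h
  rw [Lam_eq, Lam_eq]
  exact arccos_antitone h

lemma Lam_neg (x : ℝ) : Lam (-x) = π - Lam x := by
  rw [Lam_eq, Lam_eq, Real.arccos_neg]

/-- angle-sum of a (possibly degenerate) triangle with side lengths x,y,z > 0. -/

lemma tri_sum_le {x y z : ℝ} (hx : 0 < x) (hy : 0 < y) (hz : 0 < z) :
    Real.arccos ((x^2+y^2-z^2)/(2*x*y)) + Real.arccos ((x^2+z^2-y^2)/(2*x*z))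
      + Real.arccos ((y^2+z^2-x^2)/(2*y*z)) ≤ π := by
  set A := (x^2+y^2-z^2)/(2*x*y) with hA
  set B := (x^2+z^2-y^2)/(2*x*z) with hB
  set C := (y^2+z^2-x^2)/(2*y*z) with hC
  clear_value A B C
  by_cases hdeg : A < 1 ∧ B < 1 ∧ C < 1
  · obtain ⟨hA1, hB1, hC1⟩ := hdeg
    -- strict triangle inequalities
    have exy : x^2 + y^2 - z^2 < 2*x*y := by
      have := (div_lt_one (show (0:ℝ) < 2*x*y by positivity)).mp (by rw [← hA]; exact hA1)
      linarith
    have exz : x^2 + z^2 - y^2 < 2*x*z := by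
      have := (div_lt_one (show (0:ℝ) < 2*x*z by positivity)).mp (by rw [← hB]; exact hB1)
      linarith
    have eyz : y^2 + z^2 - x^2 < 2*y*z := by
      have := (div_lt_one (show (0:ℝ) < 2*y*z by positivity)).mp (by rw [← hC]; exact hC1)
      linarith
    -- (x-y)² < z², (x-z)² < y², (y-z)² < x² : strict triangle inequalities
    have t1 : z < x + y := by nlinarith [sq_nonneg (x+y-z), sq_nonneg (x-y)]
    have t2 : y < x + z := by nlinarith [sq_nonneg (x+z-y), sq_nonneg (x-z)]
    have t3 : x < y + z := by nlinarith [sq_nonneg (y+z-x), sq_nonneg (y-z)]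
    have hAm : -1 < A := by
      rw [hA, lt_div_iff₀ (show (0:ℝ) < 2*x*y by positivity)]
      nlinarith [mul_pos (show (0:ℝ) < x+y-z by linarith) (show (0:ℝ) < x+y+z by linarith)]
    have hBm : -1 < B := by
      rw [hB, lt_div_iff₀ (show (0:ℝ) < 2*x*z by positivity)]
      nlinarith [mul_pos (show (0:ℝ) < x+z-y by linarith) (show (0:ℝ) < x+z+y by linarith)]
    have hCm : -1 < C := by
      rw [hC, lt_div_iff₀ (show (0:ℝ) < 2*y*z by positivity)]
      nlinarith [mul_pos (show (0:ℝ) < y+z-x by linarith) (show (0:ℝ) < y+z+x by linarith)]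
    -- cos A + cos B > 0
    have hABpos : 0 < A + B := by
      have heq : A + B = (y+z)*((x-y+z)*(x+y-z))/(2*x*y*z) := by
        rw [hA, hB]; field_simp; ring
      rw [heq]
      apply div_pos _ (by positivity)
      apply mul_pos (by linarith)
      apply mul_pos <;> linarith
    -- key identity
    have hkey : (1-A^2)*(1-B^2) = (A*B+C)^2 := by
      rw [hA, hB, hC]; field_simp; ring
    have hABC : 0 ≤ A*B + C := by
      have heq : A*B + C = ((x+y+z)*(-x+y+z))*((x-y+z)*(x+y-z))/(4*x^2*y*z) := by
        rw [hA, hB, hC]; field_simp; ring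
      rw [heq]
      apply div_nonneg _ (by positivity)
      apply mul_nonneg
      · apply mul_nonneg <;> linarith
      · apply mul_nonneg <;> linarith
    have hcos : Real.cos (Real.arccos A + Real.arccos B) = -C := by
      rw [Real.cos_add, Real.cos_arccos hAm.le hA1.le, Real.cos_arccos hBm.le hB1.le,
        Real.sin_arccos, Real.sin_arccos, ← Real.sqrt_mul (by nlinarith)]
      rw [hkey, Real.sqrt_sq hABC]; ring
    have hsum_le : Real.arccos A + Real.arccos B ≤ π := by
      have h1 : Real.arccos A ≤ Real.arccos (-B) := arccos_antitone (by linarith)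
      rw [Real.arccos_neg] at h1
      linarith
    have hsum_nonneg : 0 ≤ Real.arccos A + Real.arccos B :=
      add_nonneg (Real.arccos_nonneg A) (Real.arccos_nonneg B)
    have heqs : Real.arccos A + Real.arccos B = Real.arccos (-C) := by
      rw [← hcos, Real.arccos_cos hsum_nonneg hsum_le]
    rw [heqs, Real.arccos_neg]
    have := Real.arccos_nonneg C
    linarith
  · -- degenerate : some cosine ≥ 1
    push_neg at hdeg
    rcases lt_or_ge A 1 with hA1 | hA1
    · rcases lt_or_ge B 1 with hB1 | hB1
      · have hC1 : 1 ≤ C := hdeg hA1 hB1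
        have hC' : 2*y*z ≤ y^2+z^2-x^2 := by
          have := (one_le_div (show (0:ℝ) < 2*y*z by positivity)).mp (by rw [← hC]; exact hC1)
          linarith
        -- (y-z)² ≥ x², so |y-z| ≥ x
        rcases le_total y z with h | h
        · -- z - y ≥ x
          have hzy : x ≤ z - y := by nlinarith [sq_nonneg (z-y-x), sq_nonneg (z-y+x)]
          have hBge : 1 ≤ B := by
            rw [hB, le_div_iff₀ (show (0:ℝ) < 2*x*z by positivity)]
            nlinarith [mul_nonneg (show (0:ℝ) ≤ z-x-y by linarith) (show (0:ℝ) ≤ z-x+y by linarith)]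
          linarith
        · have hyz : x ≤ y - z := by nlinarith [sq_nonneg (y-z-x), sq_nonneg (y-z+x)]
          have hAge : 1 ≤ A := by
            rw [hA, le_div_iff₀ (show (0:ℝ) < 2*x*y by positivity)]
            nlinarith [mul_nonneg (show (0:ℝ) ≤ y-x-z by linarith) (show (0:ℝ) ≤ y-x+z by linarith)]
          linarith
      · -- B ≥ 1 : (x-z)² ≥ y²
        rw [Real.arccos_of_one_le hB1]
        have hB' : 2*x*z ≤ x^2+z^2-y^2 := by
          have := (one_le_div (show (0:ℝ) < 2*x*z by positivity)).mp (by rw [← hB]; exact hB1)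
          linarith
        rcases le_total x z with h | h
        · -- z - x ≥ y
          have hzx : y ≤ z - x := by nlinarith [sq_nonneg (z-x-y), sq_nonneg (z-x+y)]
          have hCge : 1 ≤ C := by
            rw [hC, le_div_iff₀ (show (0:ℝ) < 2*y*z by positivity)]
            nlinarith [mul_nonneg (show (0:ℝ) ≤ z-y-x by linarith) (show (0:ℝ) ≤ z-y+x by linarith)]
          rw [Real.arccos_of_one_le hCge]
          have := Real.arccos_le_pi A
          linarith
        · -- x - z ≥ y
          have hxz : y ≤ x - z := by nlinarith [sq_nonneg (x-z-y), sq_nonneg (x-z+y)]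
          have hAge : 1 ≤ A := by
            rw [hA, le_div_iff₀ (show (0:ℝ) < 2*x*y by positivity)]
            nlinarith [mul_nonneg (show (0:ℝ) ≤ x-y-z by linarith) (show (0:ℝ) ≤ x-y+z by linarith)]
          rw [Real.arccos_of_one_le hAge]
          have := Real.arccos_le_pi C
          linarith
    · rw [Real.arccos_of_one_le hA1]
      have hA' : 2*x*y ≤ x^2+y^2-z^2 := by
        have := (one_le_div (show (0:ℝ) < 2*x*y by positivity)).mp (by rw [← hA]; exact hA1)
        linarith
      rcases le_total x y with h | h
      · -- y - x ≥ z
        have hyx : z ≤ y - x := by nlinarith [sq_nonneg (y-x-z), sq_nonneg (y-x+z)]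
        have hCge : 1 ≤ C := by
          rw [hC, le_div_iff₀ (show (0:ℝ) < 2*y*z by positivity)]
          nlinarith [mul_nonneg (show (0:ℝ) ≤ y-z-x by linarith) (show (0:ℝ) ≤ y-z+x by linarith)]
        rw [Real.arccos_of_one_le hCge]
        have := Real.arccos_le_pi B
        linarith
      · -- x - y ≥ z
        have hxy : z ≤ x - y := by nlinarith [sq_nonneg (x-y-z), sq_nonneg (x-y+z)]
        have hBge : 1 ≤ B := by
          rw [hB, le_div_iff₀ (show (0:ℝ) < 2*x*z by positivity)]
          nlinarith [mul_nonneg (show (0:ℝ) ≤ x-z-y by linarith) (show (0:ℝ) ≤ x-z+y by linarith)]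
        rw [Real.arccos_of_one_le hBge]
        have := Real.arccos_le_pi C
        linarith

lemma edge_card2 {Fc : Finset (Finset (Fin N))} {e : Finset (Fin N)}
    (he : e ∈ edges Fc) : e.card = 2 := by
  simp only [edges, Finset.mem_biUnion, Finset.mem_powersetCard] at he
  obtain ⟨f, _, _, h⟩ := he
  exact h

lemma mem_edges_of {Fc : Finset (Finset (Fin N))} {f e : Finset (Fin N)}
    (hf : f ∈ Fc) (hef : e ⊆ f) (he : e.card = 2) : e ∈ edges Fc :=
  Finset.mem_biUnion.mpr ⟨f, hf, Finset.mem_powersetCard.mpr ⟨hef, he⟩⟩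

lemma triple_eq_iff {a b c j k : Fin N} (hab : a ≠ b) (hac : a ≠ c) (hbc : b ≠ c) :
    ({a, j, k} : Finset (Fin N)) = {a, b, c} ↔ (j = b ∧ k = c) ∨ (j = c ∧ k = b) := by
  constructor
  · intro h
    have hb : b = j ∨ b = k := by
      have hmem : b ∈ ({a, j, k} : Finset (Fin N)) := by rw [h]; simp
      simp only [Finset.mem_insert, Finset.mem_singleton] at hmem
      rcases hmem with h' | h' | h'
      · exact absurd h'.symm hab
      · exact Or.inl h'
      · exact Or.inr h'
    have hc : c = j ∨ c = k := by
      have hmem : c ∈ ({a, j, k} : Finset (Fin N)) := by rw [h]; simp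
      simp only [Finset.mem_insert, Finset.mem_singleton] at hmem
      rcases hmem with h' | h' | h'
      · exact absurd h'.symm hac
      · exact Or.inl h'
      · exact Or.inr h'
    rcases hb with rfl | rfl <;> rcases hc with rfl | rfl
    · exact absurd rfl hbc
    · exact Or.inl ⟨rfl, rfl⟩
    · exact Or.inr ⟨rfl, rfl⟩
    · exact absurd rfl hbc
  · rintro (⟨rfl, rfl⟩ | ⟨rfl, rfl⟩)
    · rfl
    · rw [Finset.pair_comm]

lemma dsum (w : Fin N → Fin N → ℝ) {a b c : Fin N} (hab : a ≠ b) (hac : a ≠ c)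
    (hbc : b ≠ c) :
    (∑ j, ∑ k, if ({a, j, k} : Finset (Fin N)) = {a, b, c} then w j k else 0)
      = w b c + w c b := by
  have h1 : ∀ j k : Fin N, (if ({a, j, k} : Finset (Fin N)) = {a, b, c} then w j k else 0)
      = (if j = b ∧ k = c then w j k else 0) + (if j = c ∧ k = b then w j k else 0) := by
    intro j k
    by_cases h1 : j = b ∧ k = c
    · have h2 : ¬(j = c ∧ k = b) := fun h => hbc (h1.1.symm.trans h.1)
      rw [if_pos ((triple_eq_iff hab hac hbc).mpr (Or.inl h1)), if_pos h1, if_neg h2,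
        add_zero]
    · by_cases h2 : j = c ∧ k = b
      · rw [if_pos ((triple_eq_iff hab hac hbc).mpr (Or.inr h2)), if_neg h1, if_pos h2,
          zero_add]
      · rw [if_neg, if_neg h1, if_neg h2, add_zero]
        rw [triple_eq_iff hab hac hbc]
        tauto
  simp_rw [h1, Finset.sum_add_distrib, ite_and]
  simp [Finset.sum_ite_eq', Finset.sum_ite_eq]

lemma inner_eval (w : Fin N → Fin N → Fin N → ℝ) {a b c : Fin N} (hab : a ≠ b)
    (hac : a ≠ c) (hbc : b ≠ c) (i : Fin N) :
    (∑ j, ∑ k, if ({i, j, k} : Finset (Fin N)) = {a, b, c} then w i j k else 0) =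
      (if i = a then w a b c + w a c b else if i = b then w b a c + w b c a
        else if i = c then w c a b + w c b a else 0) := by
  by_cases ha : i = a
  · rw [if_pos ha, ha]
    exact dsum (w a) hab hac hbc
  by_cases hb : i = b
  · rw [if_neg ha, if_pos hb, hb]
    have hset : ({a, b, c} : Finset (Fin N)) = {b, a, c} := Finset.insert_comm a b {c}
    rw [hset]
    exact dsum (w b) (Ne.symm hab) hbc hac
  by_cases hc : i = c
  · rw [if_neg ha, if_neg hb, if_pos hc, hc]
    have hset : ({a, b, c} : Finset (Fin N)) = {c, a, b} := by
      ext x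
      simp only [Finset.mem_insert, Finset.mem_singleton]
      tauto
    rw [hset]
    exact dsum (w c) (Ne.symm hac) (Ne.symm hbc) hab
  · rw [if_neg ha, if_neg hb, if_neg hc]
    apply Finset.sum_eq_zero
    intro j _
    apply Finset.sum_eq_zero
    intro k _
    rw [if_neg]
    intro h
    have : i ∈ ({a, b, c} : Finset (Fin N)) := by
      rw [← h]; exact Finset.mem_insert_self i {j, k}
    simp only [Finset.mem_insert, Finset.mem_singleton] at this
    tauto

lemma sumA_eval (A : Finset (Fin N)) (X Y Z : ℝ) {a b c : Fin N} (hab : a ≠ b)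
    (hac : a ≠ c) (hbc : b ≠ c) :
    (∑ i ∈ A, (if i = a then X else if i = b then Y else if i = c then Z else 0))
      = (if a ∈ A then X else 0) + (if b ∈ A then Y else 0) + (if c ∈ A then Z else 0) := by
  have h : ∀ i : Fin N, (if i = a then X else if i = b then Y else if i = c then Z else 0)
      = (if i = a then X else 0) + (if i = b then Y else 0) + (if i = c then Z else 0) := by
    intro i
    by_cases h1 : i = a <;> by_cases h2 : i = b <;> by_cases h3 : i = c <;>
      simp_all
  simp_rw [h, Finset.sum_add_distrib, Finset.sum_ite_eq']

lemma incidence {Fc : Finset (Finset (Fin N))} (hT : IsTriangulation Fc)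
    (A : Finset (Fin N)) :
    (∑ f ∈ Fc, ((f ∩ A).powersetCard 2).card)
      = 2 * ((edges Fc).filter (fun e => e ⊆ A)).card := by
  have hper : ∀ f ∈ Fc, (f ∩ A).powersetCard 2
      = ((edges Fc).filter (fun e => e ⊆ A)).filter (fun e => e ⊆ f) := by
    intro f hf
    ext e
    simp only [Finset.mem_powersetCard, Finset.mem_filter]
    constructor
    · rintro ⟨hsub, hcard⟩
      have hef : e ⊆ f := hsub.trans Finset.inter_subset_left
      have heA : e ⊆ A := hsub.trans Finset.inter_subset_right
      exact ⟨⟨mem_edges_of hf hef hcard, heA⟩, hef⟩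
    · rintro ⟨⟨he, heA⟩, hef⟩
      exact ⟨Finset.subset_inter hef heA, edge_card2 he⟩
  calc (∑ f ∈ Fc, ((f ∩ A).powersetCard 2).card)
      = ∑ f ∈ Fc, (((edges Fc).filter (fun e => e ⊆ A)).filter (fun e => e ⊆ f)).card :=
        Finset.sum_congr rfl fun f hf => by rw [hper f hf]
    _ = ∑ f ∈ Fc, ∑ e ∈ (edges Fc).filter (fun e => e ⊆ A), if e ⊆ f then 1 else 0 :=
        Finset.sum_congr rfl fun f _ => Finset.card_filter _ _
    _ = ∑ e ∈ (edges Fc).filter (fun e => e ⊆ A), ∑ f ∈ Fc, if e ⊆ f then 1 else 0 :=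
        Finset.sum_comm
    _ = ∑ e ∈ (edges Fc).filter (fun e => e ⊆ A), (Fc.filter (fun f => e ⊆ f)).card :=
        Finset.sum_congr rfl fun e _ => (Finset.card_filter _ _).symm
    _ = ∑ e ∈ (edges Fc).filter (fun e => e ⊆ A), 2 :=
        Finset.sum_congr rfl fun e he => hT.edge2 e (Finset.mem_filter.mp he).1
    _ = 2 * ((edges Fc).filter (fun e => e ⊆ A)).card := by
        rw [Finset.sum_const, smul_eq_mul, mul_comm]

lemma lk_sum {Fc : Finset (Finset (Fin N))} (hT : IsTriangulation Fc)
    (A : Finset (Fin N)) (v : Finset (Fin N) → ℝ) :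
    (∑ p ∈ Lk Fc A, v p.1)
      = ∑ f ∈ Fc, if (f ∩ A).card = 1 then v (f \ A) else 0 := by
  rw [← Finset.sum_filter]
  refine Finset.sum_bij' (fun p _ => insert p.2 p.1)
    (fun f hf => (f \ A, (f ∩ A).min' (Finset.card_pos.mp (by
      rw [(Finset.mem_filter.mp hf).2]; norm_num)))) ?_ ?_ ?_ ?_ ?_
  · -- maps into filter
    intro p hp
    simp only [Lk, Finset.mem_filter, Finset.mem_product] at hp
    obtain ⟨⟨he, -⟩, hout, hv, hface⟩ := hp
    refine Finset.mem_filter.mpr ⟨hface, ?_⟩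
    have : insert p.2 p.1 ∩ A = {p.2} := by
      ext x
      simp only [Finset.mem_inter, Finset.mem_insert, Finset.mem_singleton]
      constructor
      · rintro ⟨rfl | hx, hxA⟩
        · rfl
        · exact absurd hxA (hout x hx)
      · rintro rfl
        exact ⟨Or.inl rfl, hv⟩
    rw [this, Finset.card_singleton]
  · -- j maps into Lk
    intro f hf
    obtain ⟨hfFc, hcard⟩ := Finset.mem_filter.mp hf
    have hne : (f ∩ A).Nonempty := Finset.card_pos.mp (by rw [hcard]; norm_num)
    set m := (f ∩ A).min' hne with hm
    have hmem : m ∈ f ∩ A := Finset.min'_mem _ hne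
    have hsingle : f ∩ A = {m} := by
      apply Finset.eq_singleton_iff_unique_mem.mpr
      refine ⟨hmem, fun x hx => ?_⟩
      have := Finset.card_eq_one.mp hcard
      obtain ⟨y, hy⟩ := this
      rw [hy] at hx hmem
      rw [Finset.mem_singleton.mp hx, Finset.mem_singleton.mp hmem]
    have hcardf : f.card = 3 := hT.card3 f hfFc
    have hcards : (f \ A).card = 2 := by
      have := Finset.card_inter_add_card_sdiff f A
      omega
    have hinsert : insert m (f \ A) = f := by
      ext x
      simp only [Finset.mem_insert, Finset.mem_sdiff]
      constructor
      · rintro (rfl | ⟨hx, -⟩)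
        · exact (Finset.mem_inter.mp hmem).1
        · exact hx
      · intro hx
        by_cases hxA : x ∈ A
        · left
          have : x ∈ f ∩ A := Finset.mem_inter.mpr ⟨hx, hxA⟩
          rw [hsingle] at this
          exact Finset.mem_singleton.mp this
        · exact Or.inr ⟨hx, hxA⟩
    simp only [Lk, Finset.mem_filter, Finset.mem_product]
    refine ⟨⟨mem_edges_of hfFc (Finset.sdiff_subset) hcards, Finset.mem_univ _⟩,
      fun x hx => (Finset.mem_sdiff.mp hx).2, (Finset.mem_inter.mp hmem).2, ?_⟩
    rw [hinsert]
    exact hfFc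
  · -- left inverse
    intro p hp
    simp only [Lk, Finset.mem_filter, Finset.mem_product] at hp
    obtain ⟨⟨he, -⟩, hout, hv, hface⟩ := hp
    have h1 : insert p.2 p.1 \ A = p.1 := by
      ext x
      simp only [Finset.mem_sdiff, Finset.mem_insert]
      constructor
      · rintro ⟨rfl | hx, hxA⟩
        · exact absurd hv hxA
        · exact hx
      · intro hx
        exact ⟨Or.inr hx, hout x hx⟩
    have h2 : insert p.2 p.1 ∩ A = {p.2} := by
      ext x
      simp only [Finset.mem_inter, Finset.mem_insert, Finset.mem_singleton]
      constructor
      · rintro ⟨rfl | hx, hxA⟩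
        · rfl
        · exact absurd hxA (hout x hx)
      · rintro rfl
        exact ⟨Or.inl rfl, hv⟩
    ext : 1
    · simp [h1]
    · simp only []
      have : ∀ hne, (insert p.2 p.1 ∩ A).min' hne = p.2 := by
        intro hne
        simp_rw [h2]
        exact Finset.min'_singleton p.2
      exact this _
  · -- right inverse
    intro f hf
    obtain ⟨hfFc, hcard⟩ := Finset.mem_filter.mp hf
    have hne : (f ∩ A).Nonempty := Finset.card_pos.mp (by rw [hcard]; norm_num)
    have hmem : (f ∩ A).min' hne ∈ f ∩ A := Finset.min'_mem _ hne
    have hsingle : f ∩ A = {(f ∩ A).min' hne} :=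
      Finset.eq_singleton_iff_unique_mem.mpr
        ⟨hmem, fun x hx => Finset.card_le_one.mp hcard.le x hx _ hmem⟩
    ext x
    simp only [Finset.mem_insert, Finset.mem_sdiff]
    constructor
    · rintro (rfl | ⟨hx, -⟩)
      · exact (Finset.mem_inter.mp hmem).1
      · exact hx
    · intro hx
      by_cases hxA : x ∈ A
      · left
        have : x ∈ f ∩ A := Finset.mem_inter.mpr ⟨hx, hxA⟩
        rw [hsingle] at this
        exact Finset.mem_singleton.mp this
      · exact Or.inr ⟨hx, hxA⟩
  · -- values agree
    intro p hp
    simp only [Lk, Finset.mem_filter, Finset.mem_product] at hp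
    obtain ⟨⟨he, -⟩, hout, hv, hface⟩ := hp
    have h1 : insert p.2 p.1 \ A = p.1 := by
      ext x
      simp only [Finset.mem_sdiff, Finset.mem_insert]
      constructor
      · rintro ⟨rfl | hx, hxA⟩
        · exact absurd hv hxA
        · exact hx
      · intro hx
        exact ⟨Or.inr hx, hout x hx⟩
    rw [h1]

section lenlem

variable {I : Finset (Fin N) → ℝ} {r : Fin N → ℝ} {i j k : Fin N}

lemma len_comm (I : Finset (Fin N) → ℝ) (r : Fin N → ℝ) (i j : Fin N) :
    len I r i j = len I r j i := by
  unfold len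
  rw [Finset.pair_comm i j]
  congr 1
  ring

lemma len_expr_nonneg (hI : 0 ≤ I {i, j}) (hi : 0 < r i) (hj : 0 < r j) :
    0 ≤ r i ^ 2 + r j ^ 2 + 2 * r i * r j * I {i, j} := by
  have h2 : 0 ≤ 2 * r i * r j * I {i, j} :=
    mul_nonneg (by positivity) hI
  nlinarith [sq_nonneg (r i), sq_nonneg (r j)]

lemma len_sq (hI : 0 ≤ I {i, j}) (hi : 0 < r i) (hj : 0 < r j) :
    len I r i j ^ 2 = r i ^ 2 + r j ^ 2 + 2 * r i * r j * I {i, j} :=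
  Real.sq_sqrt (len_expr_nonneg hI hi hj)

lemma len_pos (hI : 0 ≤ I {i, j}) (hi : 0 < r i) (hj : 0 < r j) :
    0 < len I r i j := by
  apply Real.sqrt_pos.mpr
  have h2 : 0 ≤ 2 * r i * r j * I {i, j} := mul_nonneg (by positivity) hI
  nlinarith [sq_nonneg (r j)]

lemma le_len (hI : 0 ≤ I {i, j}) (hi : 0 < r i) (hj : 0 < r j) :
    r j ≤ len I r i j := by
  have h : r j = Real.sqrt (r j ^ 2) := (Real.sqrt_sq hj.le).symm
  rw [h]
  apply Real.sqrt_le_sqrt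
  have h2 : 0 ≤ 2 * r i * r j * I {i, j} := mul_nonneg (by positivity) hI
  nlinarith [sq_nonneg (r i)]

lemma cosAng_symm (I : Finset (Fin N) → ℝ) (r : Fin N → ℝ) (i j k : Fin N) :
    cosAng I r i j k = cosAng I r i k j := by
  unfold cosAng
  rw [len_comm I r j k]
  ring

/-- generalized angle sum in a face is at most π. -/

lemma angle_sum_le {a b c : Fin N} (hIab : 0 ≤ I {a, b}) (hIac : 0 ≤ I {a, c})
    (hIbc : 0 ≤ I {b, c}) (hr : ∀ i, 0 < r i) :
    Lam (cosAng I r a b c) + Lam (cosAng I r b a c) + Lam (cosAng I r c a b) ≤ π := by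
  have hx : 0 < len I r a b := len_pos hIab (hr a) (hr b)
  have hy : 0 < len I r a c := len_pos hIac (hr a) (hr c)
  have hz : 0 < len I r b c := len_pos hIbc (hr b) (hr c)
  rw [Lam_eq, Lam_eq, Lam_eq]
  unfold cosAng
  rw [len_comm I r b a, len_comm I r c a, len_comm I r c b]
  exact tri_sum_le hx hy hz

/-- the generalized angle at `a` is at most π − Λ(I_{bc}). -/

lemma angle_le {a b c : Fin N} (hIab : 0 ≤ I {a, b}) (hIac : 0 ≤ I {a, c})
    (hIbc : 0 ≤ I {b, c}) (hr : ∀ i, 0 < r i) :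
    Lam (cosAng I r a b c) ≤ π - Lam (I {b, c}) := by
  have hx : 0 < len I r a b := len_pos hIab (hr a) (hr b)
  have hy : 0 < len I r a c := len_pos hIac (hr a) (hr c)
  have hub : r b ≤ len I r a b := le_len hIab (hr a) (hr b)
  have huc : r c ≤ len I r a c := le_len hIac (hr a) (hr c)
  have hcos : -I {b, c} ≤ cosAng I r a b c := by
    unfold cosAng
    rw [le_div_iff₀ (by positivity)]
    have hnum : -(2 * r b * r c * I {b, c})
        ≤ len I r a b ^ 2 + len I r a c ^ 2 - len I r b c ^ 2 := by
      rw [len_sq hIab (hr a) (hr b), len_sq hIac (hr a) (hr c), len_sq hIbc (hr b) (hr c)]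
      have h1 : 0 ≤ 2 * r a * r b * I {a, b} :=
        mul_nonneg (mul_nonneg (mul_nonneg two_pos.le (hr a).le) (hr b).le) hIab
      have h2 : 0 ≤ 2 * r a * r c * I {a, c} :=
        mul_nonneg (mul_nonneg (mul_nonneg two_pos.le (hr a).le) (hr c).le) hIac
      nlinarith [sq_nonneg (r a)]
    have hmul : r b * r c ≤ len I r a b * len I r a c :=
      mul_le_mul hub huc (hr c).le hx.le
    nlinarith [mul_nonneg hIbc (sub_nonneg.mpr hmul)]
  calc Lam (cosAng I r a b c) ≤ Lam (-I {b, c}) := Lam_antitone hcos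
    _ = π - Lam (I {b, c}) := Lam_neg _

end lenlem

lemma face_bound {Fc : Finset (Finset (Fin N))} (hT : IsTriangulation Fc)
    {I : Finset (Fin N) → ℝ} (hI : ∀ e ∈ edges Fc, 0 ≤ I e)
    {r : Fin N → ℝ} (hr : ∀ i, 0 < r i) (A : Finset (Fin N))
    {f : Finset (Fin N)} (hf : f ∈ Fc) :
    (∑ i ∈ A, ∑ j, ∑ k, if ({i, j, k} : Finset (Fin N)) = f then Lam (cosAng I r i j k) else 0)
      ≤ 2 * (if (f ∩ A).card = 1 then π - Lam (I (f \ A)) else 0)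
        + 2 * π * (((f ∩ A).powersetCard 2).card : ℝ)
        - 4 * π * (if f ⊆ A then 1 else 0) := by
  obtain ⟨a, b, c, hab, hac, hbc, rfl⟩ := Finset.card_eq_three.mp (hT.card3 f hf)
  have hsab : ({a, b} : Finset (Fin N)) ⊆ {a, b, c} := by
    intro x hx
    simp only [Finset.mem_insert, Finset.mem_singleton] at hx ⊢
    tauto
  have hsac : ({a, c} : Finset (Fin N)) ⊆ {a, b, c} := by
    intro x hx
    simp only [Finset.mem_insert, Finset.mem_singleton] at hx ⊢
    tauto
  have hsbc : ({b, c} : Finset (Fin N)) ⊆ {a, b, c} := by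
    intro x hx
    simp only [Finset.mem_insert, Finset.mem_singleton] at hx ⊢
    tauto
  have hIab : 0 ≤ I {a, b} := hI _ (mem_edges_of hf hsab (Finset.card_pair hab))
  have hIac : 0 ≤ I {a, c} := hI _ (mem_edges_of hf hsac (Finset.card_pair hac))
  have hIbc : 0 ≤ I {b, c} := hI _ (mem_edges_of hf hsbc (Finset.card_pair hbc))
  have hIba : 0 ≤ I {b, a} := by rwa [Finset.pair_comm]
  have hIca : 0 ≤ I {c, a} := by rwa [Finset.pair_comm]
  have hIcb : 0 ≤ I {c, b} := by rwa [Finset.pair_comm]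
  have hL : (∑ i ∈ A, ∑ j, ∑ k,
        if ({i, j, k} : Finset (Fin N)) = {a, b, c} then Lam (cosAng I r i j k) else 0)
      = (if a ∈ A then Lam (cosAng I r a b c) + Lam (cosAng I r a b c) else 0)
        + (if b ∈ A then Lam (cosAng I r b a c) + Lam (cosAng I r b a c) else 0)
        + (if c ∈ A then Lam (cosAng I r c a b) + Lam (cosAng I r c a b) else 0) := by
    rw [Finset.sum_congr rfl
      (fun i _ => inner_eval (fun i j k => Lam (cosAng I r i j k)) hab hac hbc i)]
    rw [sumA_eval A _ _ _ hab hac hbc]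
    rw [← cosAng_symm I r a b c, ← cosAng_symm I r b a c, ← cosAng_symm I r c a b]
  have hsum : Lam (cosAng I r a b c) + Lam (cosAng I r b a c) + Lam (cosAng I r c a b) ≤ π :=
    angle_sum_le hIab hIac hIbc hr
  have h1a : Lam (cosAng I r a b c) ≤ π - Lam (I {b, c}) := angle_le hIab hIac hIbc hr
  have h1b : Lam (cosAng I r b a c) ≤ π - Lam (I {a, c}) := angle_le hIba hIbc hIac hr
  have h1c : Lam (cosAng I r c a b) ≤ π - Lam (I {a, b}) := angle_le hIca hIcb hIab hr
  have hθa := Lam_nonneg (cosAng I r a b c)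
  have hθb := Lam_nonneg (cosAng I r b a c)
  have hθc := Lam_nonneg (cosAng I r c a b)
  by_cases ha : a ∈ A <;> by_cases hb : b ∈ A <;> by_cases hc : c ∈ A
  · -- all three in A
    have hsub : ({a, b, c} : Finset (Fin N)) ⊆ A := by
      intro x hx
      simp only [Finset.mem_insert, Finset.mem_singleton] at hx
      rcases hx with rfl | rfl | rfl <;> assumption
    have hint : ({a, b, c} : Finset (Fin N)) ∩ A = {a, b, c} := Finset.inter_eq_left.mpr hsub
    have hm : (({a, b, c} : Finset (Fin N)) ∩ A).card = 3 := by
      rw [hint]; exact hT.card3 _ hf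
    rw [hL, if_pos ha, if_pos hb, if_pos hc, Finset.card_powersetCard, hm,
      if_neg (by norm_num), if_pos hsub, show Nat.choose 3 2 = 3 from rfl]
    norm_num
    linarith
  · -- a, b ∈ A, c ∉ A
    have hint : ({a, b, c} : Finset (Fin N)) ∩ A = {a, b} := by
      ext x
      simp only [Finset.mem_inter, Finset.mem_insert, Finset.mem_singleton]
      constructor
      · rintro ⟨rfl | rfl | rfl, hxA⟩ <;> tauto
      · rintro (rfl | rfl) <;> exact ⟨by tauto, by assumption⟩
    have hm : (({a, b, c} : Finset (Fin N)) ∩ A).card = 2 := by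
      rw [hint]; exact Finset.card_pair hab
    have hnsub : ¬ ({a, b, c} : Finset (Fin N)) ⊆ A := fun h => hc (h (by simp))
    rw [hL, if_pos ha, if_pos hb, if_neg hc, Finset.card_powersetCard, hm,
      if_neg (by norm_num), if_neg hnsub, show Nat.choose 2 2 = 1 from rfl]
    norm_num
    linarith
  · -- a, c ∈ A, b ∉ A
    have hint : ({a, b, c} : Finset (Fin N)) ∩ A = {a, c} := by
      ext x
      simp only [Finset.mem_inter, Finset.mem_insert, Finset.mem_singleton]
      constructor
      · rintro ⟨rfl | rfl | rfl, hxA⟩ <;> tauto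
      · rintro (rfl | rfl) <;> exact ⟨by tauto, by assumption⟩
    have hm : (({a, b, c} : Finset (Fin N)) ∩ A).card = 2 := by
      rw [hint]; exact Finset.card_pair hac
    have hnsub : ¬ ({a, b, c} : Finset (Fin N)) ⊆ A := fun h => hb (h (by simp))
    rw [hL, if_pos ha, if_neg hb, if_pos hc, Finset.card_powersetCard, hm,
      if_neg (by norm_num), if_neg hnsub, show Nat.choose 2 2 = 1 from rfl]
    norm_num
    linarith
  · -- only a ∈ A
    have hint : ({a, b, c} : Finset (Fin N)) ∩ A = {a} := by
      ext x
      simp only [Finset.mem_inter, Finset.mem_insert, Finset.mem_singleton]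
      constructor
      · rintro ⟨rfl | rfl | rfl, hxA⟩ <;> tauto
      · rintro rfl; exact ⟨by tauto, by assumption⟩
    have hm : (({a, b, c} : Finset (Fin N)) ∩ A).card = 1 := by
      rw [hint]; exact Finset.card_singleton a
    have hdiff : ({a, b, c} : Finset (Fin N)) \ A = {b, c} := by
      ext x
      simp only [Finset.mem_sdiff, Finset.mem_insert, Finset.mem_singleton]
      constructor
      · rintro ⟨rfl | rfl | rfl, hxA⟩ <;> tauto
      · rintro (rfl | rfl) <;> exact ⟨by tauto, by assumption⟩
    have hnsub : ¬ ({a, b, c} : Finset (Fin N)) ⊆ A := fun h => hb (h (by simp))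
    rw [hL, if_pos ha, if_neg hb, if_neg hc, Finset.card_powersetCard, hm, hdiff,
      if_pos rfl, if_neg hnsub, show Nat.choose 1 2 = 0 from rfl]
    norm_num
    linarith
  · -- b, c ∈ A, a ∉ A
    have hint : ({a, b, c} : Finset (Fin N)) ∩ A = {b, c} := by
      ext x
      simp only [Finset.mem_inter, Finset.mem_insert, Finset.mem_singleton]
      constructor
      · rintro ⟨rfl | rfl | rfl, hxA⟩ <;> tauto
      · rintro (rfl | rfl) <;> exact ⟨by tauto, by assumption⟩
    have hm : (({a, b, c} : Finset (Fin N)) ∩ A).card = 2 := by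
      rw [hint]; exact Finset.card_pair hbc
    have hnsub : ¬ ({a, b, c} : Finset (Fin N)) ⊆ A := fun h => ha (h (by simp))
    rw [hL, if_neg ha, if_pos hb, if_pos hc, Finset.card_powersetCard, hm,
      if_neg (by norm_num), if_neg hnsub, show Nat.choose 2 2 = 1 from rfl]
    norm_num
    linarith
  · -- only b ∈ A
    have hint : ({a, b, c} : Finset (Fin N)) ∩ A = {b} := by
      ext x
      simp only [Finset.mem_inter, Finset.mem_insert, Finset.mem_singleton]
      constructor
      · rintro ⟨rfl | rfl | rfl, hxA⟩ <;> tauto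
      · rintro rfl; exact ⟨by tauto, by assumption⟩
    have hm : (({a, b, c} : Finset (Fin N)) ∩ A).card = 1 := by
      rw [hint]; exact Finset.card_singleton b
    have hdiff : ({a, b, c} : Finset (Fin N)) \ A = {a, c} := by
      ext x
      simp only [Finset.mem_sdiff, Finset.mem_insert, Finset.mem_singleton]
      constructor
      · rintro ⟨rfl | rfl | rfl, hxA⟩ <;> tauto
      · rintro (rfl | rfl) <;> exact ⟨by tauto, by assumption⟩
    have hnsub : ¬ ({a, b, c} : Finset (Fin N)) ⊆ A := fun h => ha (h (by simp))
    rw [hL, if_neg ha, if_pos hb, if_neg hc, Finset.card_powersetCard, hm, hdiff,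
      if_pos rfl, if_neg hnsub, show Nat.choose 1 2 = 0 from rfl]
    norm_num
    linarith
  · -- only c ∈ A
    have hint : ({a, b, c} : Finset (Fin N)) ∩ A = {c} := by
      ext x
      simp only [Finset.mem_inter, Finset.mem_insert, Finset.mem_singleton]
      constructor
      · rintro ⟨rfl | rfl | rfl, hxA⟩ <;> tauto
      · rintro rfl; exact ⟨by tauto, by assumption⟩
    have hm : (({a, b, c} : Finset (Fin N)) ∩ A).card = 1 := by
      rw [hint]; exact Finset.card_singleton c
    have hdiff : ({a, b, c} : Finset (Fin N)) \ A = {a, b} := by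
      ext x
      simp only [Finset.mem_sdiff, Finset.mem_insert, Finset.mem_singleton]
      constructor
      · rintro ⟨rfl | rfl | rfl, hxA⟩ <;> tauto
      · rintro (rfl | rfl) <;> exact ⟨by tauto, by assumption⟩
    have hnsub : ¬ ({a, b, c} : Finset (Fin N)) ⊆ A := fun h => ha (h (by simp))
    rw [hL, if_neg ha, if_neg hb, if_pos hc, Finset.card_powersetCard, hm, hdiff,
      if_pos rfl, if_neg hnsub, show Nat.choose 1 2 = 0 from rfl]
    norm_num
    linarith
  · -- none in A
    have hint : ({a, b, c} : Finset (Fin N)) ∩ A = ∅ := by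
      ext x
      simp only [Finset.mem_inter, Finset.mem_insert, Finset.mem_singleton,
        Finset.notMem_empty, iff_false, not_and]
      rintro (rfl | rfl | rfl) <;> assumption
    have hm : (({a, b, c} : Finset (Fin N)) ∩ A).card = 0 := by rw [hint]; rfl
    have hnsub : ¬ ({a, b, c} : Finset (Fin N)) ⊆ A := fun h => ha (h (by simp))
    rw [hL, if_neg ha, if_neg hb, if_neg hc, Finset.card_powersetCard, hm,
      if_neg (by norm_num), if_neg hnsub, show Nat.choose 0 2 = 0 from rfl]
    norm_num

lemma sum_Kt_ge (Fc : Finset (Finset (Fin N))) (hT : IsTriangulation Fc)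
    (I : Finset (Fin N) → ℝ) (hI : ∀ e ∈ edges Fc, 0 ≤ I e)
    (r : Fin N → ℝ) (hr : ∀ i, 0 < r i) (A : Finset (Fin N)) :
    Ybound Fc I A ≤ ∑ i ∈ A, Kt Fc I r i := by
  classical
  have hKt : (∑ i ∈ A, Kt Fc I r i)
      = 2 * π * A.card - (1/2) * ∑ i ∈ A, ∑ j, ∑ k,
          (if ({i, j, k} : Finset (Fin N)) ∈ Fc then Lam (cosAng I r i j k) else 0) := by
    unfold Kt
    rw [Finset.sum_sub_distrib, Finset.sum_const, ← Finset.mul_sum, nsmul_eq_mul]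
    ring
  have hstepA : (∑ i ∈ A, ∑ j, ∑ k,
        (if ({i, j, k} : Finset (Fin N)) ∈ Fc then Lam (cosAng I r i j k) else 0))
      = ∑ f ∈ Fc, ∑ i ∈ A, ∑ j, ∑ k,
          (if ({i, j, k} : Finset (Fin N)) = f then Lam (cosAng I r i j k) else 0) := by
    have h1 : ∀ i j k : Fin N,
        (if ({i, j, k} : Finset (Fin N)) ∈ Fc then Lam (cosAng I r i j k) else 0)
        = ∑ f ∈ Fc, (if ({i, j, k} : Finset (Fin N)) = f then Lam (cosAng I r i j k) else 0) :=
      fun i j k => (Finset.sum_ite_eq Fc ({i, j, k} : Finset (Fin N)) (fun _ => Lam (cosAng I r i j k))).symm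
    calc (∑ i ∈ A, ∑ j, ∑ k,
          (if ({i, j, k} : Finset (Fin N)) ∈ Fc then Lam (cosAng I r i j k) else 0))
        = ∑ i ∈ A, ∑ j, ∑ k, ∑ f ∈ Fc,
            (if ({i, j, k} : Finset (Fin N)) = f then Lam (cosAng I r i j k) else 0) :=
          Finset.sum_congr rfl fun i _ => Finset.sum_congr rfl fun j _ =>
            Finset.sum_congr rfl fun k _ => h1 i j k
      _ = ∑ i ∈ A, ∑ j, ∑ f ∈ Fc, ∑ k,
            (if ({i, j, k} : Finset (Fin N)) = f then Lam (cosAng I r i j k) else 0) :=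
          Finset.sum_congr rfl fun i _ => Finset.sum_congr rfl fun j _ => Finset.sum_comm
      _ = ∑ i ∈ A, ∑ f ∈ Fc, ∑ j, ∑ k,
            (if ({i, j, k} : Finset (Fin N)) = f then Lam (cosAng I r i j k) else 0) :=
          Finset.sum_congr rfl fun i _ => Finset.sum_comm
      _ = ∑ f ∈ Fc, ∑ i ∈ A, ∑ j, ∑ k,
            (if ({i, j, k} : Finset (Fin N)) = f then Lam (cosAng I r i j k) else 0) :=
          Finset.sum_comm
  have hb : (∑ f ∈ Fc, ∑ i ∈ A, ∑ j, ∑ k,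
        (if ({i, j, k} : Finset (Fin N)) = f then Lam (cosAng I r i j k) else 0))
      ≤ ∑ f ∈ Fc, (2 * (if (f ∩ A).card = 1 then π - Lam (I (f \ A)) else 0)
          + 2 * π * (((f ∩ A).powersetCard 2).card : ℝ)
          - 4 * π * (if f ⊆ A then 1 else 0)) :=
    Finset.sum_le_sum fun f hf => face_bound hT hI hr A hf
  have hsubcnt : (∑ f ∈ Fc, (if f ⊆ A then (1:ℝ) else 0))
      = ((Fc.filter (fun f => f ⊆ A)).card : ℝ) := by
    rw [Finset.sum_boole]
  have hsplit : (∑ f ∈ Fc, (2 * (if (f ∩ A).card = 1 then π - Lam (I (f \ A)) else 0)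
        + 2 * π * (((f ∩ A).powersetCard 2).card : ℝ)
        - 4 * π * (if f ⊆ A then 1 else 0)))
      = 2 * (∑ p ∈ Lk Fc A, (π - Lam (I p.1)))
        + 2 * π * (2 * (((edges Fc).filter (fun e => e ⊆ A)).card : ℝ))
        - 4 * π * ((Fc.filter (fun f => f ⊆ A)).card : ℝ) := by
    rw [Finset.sum_sub_distrib, Finset.sum_add_distrib, ← Finset.mul_sum, ← Finset.mul_sum,
      ← Finset.mul_sum, lk_sum hT A (fun e => π - Lam (I e)), hsubcnt]
    have hcast : (∑ f ∈ Fc, (((f ∩ A).powersetCard 2).card : ℝ))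
        = ((∑ f ∈ Fc, ((f ∩ A).powersetCard 2).card : ℕ) : ℝ) := by
      rw [Nat.cast_sum]
    rw [hcast, incidence hT A]
    push_cast
    ring
  rw [hKt, hstepA]
  unfold Ybound chiSub
  rw [hsplit] at hb
  push_cast
  linarith

/-- if r* ∈ ℝ^N_{>0} is a generalized metric with constant
extended α-curvature then for every nonempty proper A ⊂ V,
2πχ(M)·(Σ_{i∈A}(r*_i)^α)/(Σ_j (r*_j)^α) ≥ −Σ_{(e,v)∈Lk(A)}(π − Λ(I_e)) + 2πχ(F_A). -/
theorem stmt16 {N : ℕ} (Fc : Finset (Finset (Fin N))) (hT : IsTriangulation Fc)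
    (I : Finset (Fin N) → ℝ) (hI : ∀ e ∈ edges Fc, 0 ≤ I e) (α : ℝ)
    (rstar : Fin N → ℝ) (hrs : ∀ i, 0 < rstar i)
    (hconst : ∀ i : Fin N, Kt Fc I rstar i = sA Fc α rstar * rstar i ^ α) :
    ∀ A : Finset (Fin N), A.Nonempty → A ≠ Finset.univ →
      Ybound Fc I A ≤
        2 * π * (chi Fc : ℝ) * (∑ i ∈ A, rstar i ^ α) / (∑ j, rstar j ^ α) := by
  intro A hA1 _
  have key : (∑ i ∈ A, Kt Fc I rstar i)
      = 2 * π * (chi Fc : ℝ) * (∑ i ∈ A, rstar i ^ α) / (∑ j, rstar j ^ α) := by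
    calc (∑ i ∈ A, Kt Fc I rstar i) = ∑ i ∈ A, sA Fc α rstar * rstar i ^ α :=
          Finset.sum_congr rfl fun i _ => hconst i
      _ = sA Fc α rstar * ∑ i ∈ A, rstar i ^ α := by rw [Finset.mul_sum]
      _ = 2 * π * (chi Fc : ℝ) * (∑ i ∈ A, rstar i ^ α) / (∑ j, rstar j ^ α) := by
          unfold sA
          rw [div_mul_eq_mul_div]
  rw [← key]
  exact sum_Kt_ge Fc hT I hI rstar hrs A

end IDCP
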